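/- arXiv:1209.0938 — 2 statements merged into one kernel-verified Lean document; each statement's English description precedes it below -/
import Mathlib

section
/- Let α = α₁...αₙ and β = β₁...βₙ be two words in SRW(ℤ⁺). If shape(R(α)) = shape(R(β)), then s_[α] = s_[β] (the two words represent the same permutation). -/
/-!
Read the columns of a tower diagram from right to left, column `i` of height `h` giving the run
`i, i + 1, …, i + h - 1`. By induction along the SR algorithm, `s_[α]` is the permutation of this
natural word of `shape(R(α))`, so it depends on the shape alone. Indeed, a slide adds one cell on
top of a column and multiplies the natural permutation by `s_α` on the right. If the slide stops
in column `p`, then `s_α` commutes past the columns left of `p`, whose letters are at most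
`α - 2`, and becomes the new last letter `α` of the run of column `p`. If it moves on to the
columns right of `p` with `α + 1`, the braid relation
`s_{α+1} (s_p ⋯ s_{p+h-1}) = (s_p ⋯ s_{p+h-1}) s_α` turns the letter `α + 1` produced there into
`s_α` past column `p`, and it commutes past the columns further left.
-/

abbrev Cell : Type := ℕ × ℕ

/-- A tower diagram: a finite set of cells `(i, j)` with `i ≥ 1` that is downward
closed in each column. -/
def IsTowerDiagram (T : Finset Cell) : Prop :=
  ∀ c ∈ T, 1 ≤ c.1 ∧ ∀ j' ≤ c.2, (c.1, j') ∈ T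

/-- The flight path of a cell of `T` (F1: direct flight, F2: zigzag flight). -/
inductive FlightPath (T : Finset Cell) : Cell → Finset Cell → Prop
  | direct (i j : ℕ) (hmem : (i, j) ∈ T)
      (hnone : ∀ c ∈ T, ¬(c.1 < i ∧ c.1 + c.2 + 1 = i + j)) :
      FlightPath T (i, j) {(i, j)}
  | zigzag (i j i' j' : ℕ) (P : Finset Cell)
      (hmem : (i, j) ∈ T) (hmem' : (i', j') ∈ T)
      (hleft : i' < i) (hdiag : i' + j' + 1 = i + j)
      (hclosest : ∀ c ∈ T, c.1 < i → c.1 + c.2 + 1 = i + j → c.1 ≤ i')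
      (hup : (i', j' + 1) ∈ T)
      (hrec : FlightPath T (i', j') P) :
      FlightPath T (i, j) (insert (i, j) (insert (i', j' + 1) P))

/-- `FlightNumber T c f`: `c` has a flight path in `T` whose lexicographically
least cell has coordinate sum `f`. -/
def FlightNumber (T : Finset Cell) (c : Cell) (f : ℕ) : Prop :=
  ∃ P : Finset Cell, FlightPath T c P ∧
    ∃ m ∈ P, m.1 + m.2 = f ∧ ∀ p ∈ P, m.1 < p.1 ∨ (m.1 = p.1 ∧ m.2 ≤ p.2)

/-- A corner cell: it has a flight path and no cell on top of it. -/
def IsCornerCell (T : Finset Cell) (c : Cell) : Prop :=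
  c ∈ T ∧ (c.1, c.2 + 1) ∉ T ∧ ∃ P, FlightPath T c P

/-- `SlideAux T lo α T'` : sliding `α` into the subdiagram of `T` consisting of
the towers in columns `≥ lo` does not terminate and produces `T'`. -/
inductive SlideAux (T : Finset Cell) : ℕ → ℕ → Finset Cell → Prop
  | s1a (lo α : ℕ)
      (h1 : ∀ c ∈ T, lo ≤ c.1 → c.1 + c.2 + 1 ≠ α)
      (h2 : ∀ c ∈ T, lo ≤ c.1 → c.1 + c.2 ≠ α) :
      SlideAux T lo α (insert (α, 0) T)
  | s1c (lo α : ℕ) (T' : Finset Cell)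
      (h1 : ∀ c ∈ T, lo ≤ c.1 → c.1 + c.2 + 1 ≠ α)
      (h2 : (α, 0) ∈ T) (h2' : lo ≤ α) (h3 : (α, 1) ∈ T)
      (hrec : SlideAux T (α + 1) (α + 1) T') :
      SlideAux T lo α T'
  | s2a (lo α i j : ℕ)
      (hmem : (i, j) ∈ T) (hlo : lo ≤ i) (hdiag : i + j + 1 = α)
      (hmin : ∀ c ∈ T, lo ≤ c.1 → c.1 + c.2 + 1 = α → i ≤ c.1)
      (htop : (i, j + 1) ∉ T) :
      SlideAux T lo α (insert (i, j + 1) T)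
  | s2c (lo α i j : ℕ) (T' : Finset Cell)
      (hmem : (i, j) ∈ T) (hlo : lo ≤ i) (hdiag : i + j + 1 = α)
      (hmin : ∀ c ∈ T, lo ≤ c.1 → c.1 + c.2 + 1 = α → i ≤ c.1)
      (h1 : (i, j + 1) ∈ T) (h2 : (i, j + 2) ∈ T)
      (hrec : SlideAux T (i + 1) (α + 1) T') :
      SlideAux T lo α T'

/-- The slide `α ↘ T` does not terminate and produces `T'`. -/
def Slides (T : Finset Cell) (α : ℕ) (T' : Finset Cell) : Prop :=
  SlideAux T 0 α T'

/-- Successive sliding of the letters of a word into the empty diagram. -/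
inductive SRDiagram : List ℕ → Finset Cell → Prop
  | nil : SRDiagram [] ∅
  | snoc {w : List ℕ} {T T' : Finset Cell} {a : ℕ}
      (hw : SRDiagram w T) (ha : Slides T a T') :
      SRDiagram (w ++ [a]) T'

/-- The shape (underlying diagram) of a labelled tableau. -/
def shapeOf (R : Finset (Cell × ℕ)) : Finset Cell := R.image Prod.fst

/-- The recording tableau of the SR algorithm: the cell created at step `k` is
labelled `k`. -/
inductive SRRecord : List ℕ → Finset (Cell × ℕ) → Prop
  | nil : SRRecord [] ∅
  | snoc {w : List ℕ} {R : Finset (Cell × ℕ)} {a : ℕ} {c : Cell}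
      (hw : SRRecord w R) (hc : c ∉ shapeOf R)
      (ha : Slides (shapeOf R) a (insert c (shapeOf R))) :
      SRRecord (w ++ [a]) (insert (c, w.length + 1) R)

/-- The sliding tableau of the SR algorithm: each new cell `(i, j)` is labelled
`i + j`. -/
inductive SRSliding : List ℕ → Finset (Cell × ℕ) → Prop
  | nil : SRSliding [] ∅
  | snoc {w : List ℕ} {S : Finset (Cell × ℕ)} {a : ℕ} {c : Cell}
      (hw : SRSliding w S) (hc : c ∉ shapeOf S)
      (ha : Slides (shapeOf S) a (insert c (shapeOf S))) :
      SRSliding (w ++ [a]) (insert (c, c.1 + c.2) S)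

/-- A tower tableau: a bijective labelling of a tower diagram by `{1, …, n}`. -/
def IsTowerTableau (R : Finset (Cell × ℕ)) : Prop :=
  IsTowerDiagram (shapeOf R) ∧
  (∀ p ∈ R, ∀ q ∈ R, p.1 = q.1 → p = q) ∧
  R.image Prod.snd = Finset.Icc 1 R.card

/-- The subtableau of cells with labels `≤ a`. -/
def labelLE (R : Finset (Cell × ℕ)) (a : ℕ) : Finset (Cell × ℕ) :=
  R.filter fun p => p.2 ≤ a

/-- A standard tower tableau. -/
def IsStandardTowerTableau (R : Finset (Cell × ℕ)) : Prop :=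
  IsTowerTableau R ∧
  ∀ p ∈ R, IsTowerDiagram (shapeOf (labelLE R p.2)) ∧
    IsCornerCell (shapeOf (labelLE R p.2)) p.1

/-- `ReadsTo R w` : `w` is the reading word of the tableau `R`: the `k`-th letter
is the flight number, in `shape (R_{≤ k})`, of the cell labelled `k`. -/
def ReadsTo (R : Finset (Cell × ℕ)) (w : List ℕ) : Prop :=
  w.length = R.card ∧
  ∀ k : Fin w.length, ∀ c : Cell, (c, (k : ℕ) + 1) ∈ R →
    FlightNumber (shapeOf (labelLE R ((k : ℕ) + 1))) c (w.get k)

/-- A word of positive integers. -/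
def IsPosWord (w : List ℕ) : Prop := ∀ a ∈ w, 1 ≤ a

/-- The permutation represented by a word: the product of the corresponding
adjacent transpositions `sᵢ = (i, i+1)`. -/
def permOf (w : List ℕ) : Equiv.Perm ℕ :=
  (w.map fun i => Equiv.swap i (i + 1)).prod

/-- A reduced word: of minimal length among the positive words representing the
same permutation. -/
def IsReducedWord (w : List ℕ) : Prop :=
  IsPosWord w ∧
    ∀ w' : List ℕ, IsPosWord w' → permOf w' = permOf w → w.length ≤ w'.length

/-- A finite permutation: an element of the direct limit `⋃ₙ Sₙ`. -/
def FinitePerm (ω : Equiv.Perm ℕ) : Prop := ∃ w, IsPosWord w ∧ permOf w = ω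

/-- The Coxeter length of a finite permutation. -/
noncomputable def coxLength (ω : Equiv.Perm ℕ) : ℕ :=
  sInf {n | ∃ w : List ℕ, IsPosWord w ∧ permOf w = ω ∧ w.length = n}

/-- The Rothe diagram of a permutation (pairs written `(row, column)`). -/
def RotheDiagram (ω : Equiv.Perm ℕ) : Set (ℕ × ℕ) :=
  {p | 1 ≤ p.1 ∧ 1 ≤ p.2 ∧ p.2 < ω p.1 ∧ p.1 < ω.symm p.2}

/-- Interchanging rows `i` and `i + 1` of a diagram. -/
def rowSwap (i : ℕ) (D : Set (ℕ × ℕ)) : Set (ℕ × ℕ) :=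
  {p | (Equiv.swap i (i + 1) p.1, p.2) ∈ D}

/-- The natural labelling of a tower diagram: labels `1, …, n` go bottom to top
within each tower, taking the towers from right to left. -/
def naturalTableau (T : Finset Cell) : Finset (Cell × ℕ) :=
  T.image fun c => (c, (T.filter fun d => c.1 < d.1).card + c.2 + 1)

/-- A word in natural form: a concatenation of blocks, each a strictly
increasing run of consecutive integers, whose initial terms strictly decrease. -/
def IsNaturalForm (η : List ℕ) : Prop :=
  ∃ blocks : List (List ℕ),
    η = blocks.flatten ∧
    (∀ b ∈ blocks, ∃ s len : ℕ, 1 ≤ len ∧ b = List.range' s len) ∧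
    List.Chain' (· > ·) (blocks.map fun b => b.headI)

open Equiv

lemma permOf_append (u v : List ℕ) : permOf (u ++ v) = permOf u * permOf v := by
  simp [permOf, List.prod_append]

lemma permOf_singleton (a : ℕ) : permOf [a] = swap a (a + 1) := by
  simp [permOf]

lemma commute_swap_permOf {α : ℕ} {u : List ℕ} (hu : ∀ k ∈ u, k + 2 ≤ α) :
    Commute (swap α (α + 1)) (permOf u) := by
  refine Commute.list_prod_right _ _ fun x hx => ?_
  obtain ⟨k, hk, rfl⟩ := List.mem_map.1 hx
  have hkα := hu k hk
  refine Perm.Disjoint.commute fun x => ?_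
  by_cases hx : x = α ∨ x = α + 1
  · exact .inr (swap_apply_of_ne_of_ne (by omega) (by omega))
  · rw [not_or] at hx
    exact .inl (swap_apply_of_ne_of_ne hx.1 hx.2)

lemma permOf_range'_succ (i h : ℕ) :
    permOf (List.range' i (h + 1)) = permOf (List.range' i h) * swap (i + h) (i + h + 1) := by
  rw [List.range'_concat, permOf_append, permOf_singleton, one_mul]

lemma permOf_range'_apply_of_lt {i h x : ℕ} (hx : i + h < x) :
    permOf (List.range' i h) x = x := by
  induction h with
  | zero => rfl
  | succ h ih =>
    rw [permOf_range'_succ, Perm.mul_apply, swap_apply_of_ne_of_ne (by omega) (by omega),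
      ih (by omega)]

lemma permOf_range'_apply {i h k : ℕ} (hik : i ≤ k) (hk : k < i + h) :
    permOf (List.range' i h) k = k + 1 := by
  induction h with
  | zero => omega
  | succ h ih =>
    rw [permOf_range'_succ, Perm.mul_apply]
    rcases Nat.lt_or_ge k (i + h) with hk | hk
    · rw [swap_apply_of_ne_of_ne (by omega) (by omega), ih hk]
    · obtain rfl : k = i + h := by omega
      rw [swap_apply_left, permOf_range'_apply_of_lt (by omega)]

lemma swap_mul_permOf_range' {i h α : ℕ} (hi : i ≤ α) (hα : α + 2 ≤ i + h) :
    swap (α + 1) (α + 2) * permOf (List.range' i h) =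
      permOf (List.range' i h) * swap α (α + 1) := by
  rw [mul_swap_eq_swap_mul, permOf_range'_apply hi (by omega),
    permOf_range'_apply (by omega) (by omega)]

def colHeight (T : Finset Cell) (i : ℕ) : ℕ := (T.filter fun c => c.1 = i).card

def IsDownClosed (T : Finset Cell) : Prop := ∀ c ∈ T, ∀ j ≤ c.2, (c.1, j) ∈ T

lemma IsDownClosed.mem_iff_lt_colHeight {T : Finset Cell} (hT : IsDownClosed T) (i j : ℕ) :
    (i, j) ∈ T ↔ j < colHeight T i := by
  let column (n : ℕ) : Finset Cell :=
    (Finset.range n).map ⟨(i, ·), fun _ _ h => (Prod.mk.inj h).2⟩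
  constructor
  · intro hij
    have hsub : column (j + 1) ⊆ T.filter fun c => c.1 = i := by
      intro c hc
      obtain ⟨k, hk, rfl⟩ := Finset.mem_map.1 hc
      exact Finset.mem_filter.2 ⟨hT _ hij k (Nat.lt_succ_iff.1 (Finset.mem_range.1 hk)), rfl⟩
    simpa [column, colHeight] using Finset.card_le_card hsub
  · intro hlt
    by_contra hij
    have hsub : (T.filter fun c => c.1 = i) ⊆ column j := by
      intro c hc
      obtain ⟨hcT, rfl⟩ := Finset.mem_filter.1 hc
      refine Finset.mem_map.2 ⟨c.2, Finset.mem_range.2 ?_, rfl⟩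
      by_contra hjc
      exact hij (hT c hcT j (not_lt.1 hjc))
    have := Finset.card_le_card hsub
    simp only [column, Finset.card_map, Finset.card_range] at this
    exact absurd hlt (not_lt.2 this)

lemma IsDownClosed.top_notMem {T : Finset Cell} (hT : IsDownClosed T) (p : ℕ) :
    (p, colHeight T p) ∉ T := by
  simp [hT.mem_iff_lt_colHeight]

lemma IsDownClosed.colHeight_insert_top {T : Finset Cell} (hT : IsDownClosed T) (p i : ℕ) :
    colHeight (insert (p, colHeight T p) T) i =
      if p = i then colHeight T p + 1 else colHeight T i := by
  have htop := hT.top_notMem p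
  rw [colHeight, Finset.filter_insert]
  split_ifs with hpi
  · subst hpi
    exact Finset.card_insert_of_notMem fun h => htop (Finset.mem_of_mem_filter _ h)
  · rfl

lemma IsDownClosed.insert_top {T : Finset Cell} (hT : IsDownClosed T) (p : ℕ) :
    IsDownClosed (insert (p, colHeight T p) T) := by
  intro c hc j hj
  rcases Finset.mem_insert.1 hc with rfl | hc
  · rcases Nat.lt_or_ge j (colHeight T p) with hlt | hge
    · exact Finset.mem_insert_of_mem ((hT.mem_iff_lt_colHeight _ _).2 hlt)
    · obtain rfl : j = colHeight T p := le_antisymm hj hge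
      exact Finset.mem_insert_self _ _
  · exact Finset.mem_insert_of_mem (hT c hc j hj)

lemma IsDownClosed.colHeight_insert_top_of_ne {T : Finset Cell} (hT : IsDownClosed T) {p i : ℕ}
    (hpi : p ≠ i) : colHeight (insert (p, colHeight T p) T) i = colHeight T i := by
  rw [hT.colHeight_insert_top, if_neg hpi]

lemma IsDownClosed.colHeight_eq {T : Finset Cell} (hT : IsDownClosed T) {i n : ℕ}
    (hbelow : ∀ k < n, (i, k) ∈ T) (hn : (i, n) ∉ T) : colHeight T i = n := by
  have hle := not_lt.1 ((hT.mem_iff_lt_colHeight i n).not.1 hn)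
  rcases n with _ | n
  · omega
  · have := (hT.mem_iff_lt_colHeight i n).1 (hbelow n n.lt_succ_self)
    omega

/-- The columns `lo ≤ i < N` of `T` read from right to left, each from bottom to top, a cell
`(i, j)` being read as the letter `i + j`. -/
def naturalWord (T : Finset Cell) (lo N : ℕ) : List ℕ :=
  (List.range' lo (N - lo)).reverse.flatMap fun i => List.range' i (colHeight T i)

lemma naturalWord_append (T : Finset Cell) {lo mid N : ℕ} (h₁ : lo ≤ mid) (h₂ : mid ≤ N) :
    naturalWord T lo N = naturalWord T mid N ++ naturalWord T lo mid := by
  have h := List.range'_append (s := lo) (m := mid - lo) (n := N - mid) (step := 1)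
  rw [show lo + 1 * (mid - lo) = mid by omega, show mid - lo + (N - mid) = N - lo by omega] at h
  simp [naturalWord, ← h]

lemma naturalWord_self_succ (T : Finset Cell) (i : ℕ) :
    naturalWord T i (i + 1) = List.range' i (colHeight T i) := by
  simp [naturalWord]

lemma naturalWord_eq_of_lt (T : Finset Cell) {lo p N : ℕ} (hlo : lo ≤ p) (hpN : p < N) :
    naturalWord T lo N =
      naturalWord T (p + 1) N ++ List.range' p (colHeight T p) ++ naturalWord T lo p := by
  rw [naturalWord_append T hlo hpN.le, naturalWord_append T (Nat.le_succ p) hpN,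
    naturalWord_self_succ]

lemma naturalWord_congr {T T' : Finset Cell} {lo N : ℕ}
    (h : ∀ i, lo ≤ i → i < N → colHeight T i = colHeight T' i) :
    naturalWord T lo N = naturalWord T' lo N := by
  refine List.flatMap_congr fun i hi => ?_
  rw [List.mem_reverse, List.mem_range'_1] at hi
  rw [h i hi.1 (by omega)]

lemma IsDownClosed.exists_of_mem_naturalWord {T : Finset Cell} (hT : IsDownClosed T)
    {lo N k : ℕ} (hk : k ∈ naturalWord T lo N) :
    ∃ c ∈ T, lo ≤ c.1 ∧ c.1 < N ∧ c.1 + c.2 = k := by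
  obtain ⟨i, hi, hki⟩ := List.mem_flatMap.1 hk
  rw [List.mem_reverse, List.mem_range'_1] at hi
  rw [List.mem_range'_1] at hki
  exact ⟨(i, k - i), (hT.mem_iff_lt_colHeight _ _).2 (by omega), hi.1, by omega, by simp; omega⟩

/-- By down-closure, a column left of `p ≤ α` with no cell on the diagonal `α - 1` has all its
letters `≤ α - 2`. -/
lemma IsDownClosed.commute_swap_permOf_naturalWord {T : Finset Cell} (hT : IsDownClosed T)
    {lo p α : ℕ} (hpα : p ≤ α)
    (hdiag : ∀ c ∈ T, lo ≤ c.1 → c.1 < p → c.1 + c.2 + 1 ≠ α) :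
    Commute (swap α (α + 1)) (permOf (naturalWord T lo p)) := by
  refine commute_swap_permOf fun k hk => ?_
  obtain ⟨c, hcT, hlo, hcp, rfl⟩ := hT.exists_of_mem_naturalWord hk
  by_contra hlt
  exact hdiag _ (hT c hcT (α - 1 - c.1) (by omega)) hlo hcp (by simp only; omega)

lemma IsDownClosed.permOf_naturalWord_insert_top {T : Finset Cell} (hT : IsDownClosed T)
    {lo p N α : ℕ} (hlo : lo ≤ p) (hpN : p < N) (hα : p + colHeight T p = α)
    (hcomm : Commute (swap α (α + 1)) (permOf (naturalWord T lo p))) :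
    permOf (naturalWord (insert (p, colHeight T p) T) lo N) =
      permOf (naturalWord T lo N) * swap α (α + 1) := by
  have hagree : ∀ i, i ≠ p → colHeight T i = colHeight (insert (p, colHeight T p) T) i :=
    fun i hi => (hT.colHeight_insert_top_of_ne (Ne.symm hi)).symm
  rw [naturalWord_eq_of_lt _ hlo hpN, naturalWord_eq_of_lt _ hlo hpN,
    ← naturalWord_congr (lo := p + 1) (N := N) fun i hi _ => hagree i (by omega),
    ← naturalWord_congr (lo := lo) (N := p) fun i _ hi => hagree i (by omega),
    hT.colHeight_insert_top, if_pos rfl]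
  simp only [permOf_append, permOf_range'_succ, hα, mul_assoc, hcomm.eq]

lemma permOf_naturalWord_of_braid {T T' : Finset Cell} {lo p N α : ℕ} (hlo : lo ≤ p)
    (hpN : p < N) (hpα : p ≤ α) (hα : α + 2 ≤ p + colHeight T p)
    (hagree : ∀ i ≤ p, colHeight T i = colHeight T' i)
    (hright : permOf (naturalWord T' (p + 1) N) =
      permOf (naturalWord T (p + 1) N) * swap (α + 1) (α + 2))
    (hcomm : Commute (swap α (α + 1)) (permOf (naturalWord T lo p))) :
    permOf (naturalWord T' lo N) = permOf (naturalWord T lo N) * swap α (α + 1) := by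
  rw [naturalWord_eq_of_lt _ hlo hpN, naturalWord_eq_of_lt _ hlo hpN,
    ← naturalWord_congr (lo := lo) (N := p) fun i _ hi => hagree i (by omega),
    ← hagree p le_rfl]
  simp only [permOf_append, hright, mul_assoc, swap_mul_permOf_range' hpα hα]
  simp only [← mul_assoc, hcomm.eq]

namespace SlideAux

variable {T T' : Finset Cell} {lo α : ℕ}

theorem exists_eq_insert_top (h : SlideAux T lo α T') (hT : IsDownClosed T) (hlo : lo ≤ α) :
    ∃ p, lo ≤ p ∧ T' = insert (p, colHeight T p) T := by
  induction h with
  | s1a lo α _ h2 =>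
    refine ⟨α, hlo, ?_⟩
    rw [hT.colHeight_eq (n := 0) (by simp) fun hmem => h2 _ hmem hlo rfl]
  | s1c lo α T' _ _ _ _ _ ih =>
    obtain ⟨p, hp, rfl⟩ := ih le_rfl
    exact ⟨p, by omega, rfl⟩
  | s2a lo α i j hmem hlo' _ _ htop =>
    refine ⟨i, hlo', ?_⟩
    rw [hT.colHeight_eq (fun k hk => hT _ hmem k (by simp only; omega)) htop]
  | s2c lo α i j T' _ hlo' hdiag _ _ _ _ ih =>
    obtain ⟨p, hp, rfl⟩ := ih (by omega)
    exact ⟨p, by omega, rfl⟩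

theorem permOf_naturalWord (h : SlideAux T lo α T') (hT : IsDownClosed T) (hlo : lo ≤ α)
    (N : ℕ) (hN : ∀ c ∈ T', c.1 < N) :
    permOf (naturalWord T' lo N) = permOf (naturalWord T lo N) * swap α (α + 1) := by
  induction h with
  | s1a lo α h1 h2 =>
    have h0 := hT.colHeight_eq (n := 0) (by simp) fun hmem => h2 _ hmem hlo rfl
    have := hT.permOf_naturalWord_insert_top hlo (hN _ (Finset.mem_insert_self _ _))
      (by rw [h0, add_zero]) (hT.commute_swap_permOf_naturalWord le_rfl fun c hc hl _ => h1 c hc hl)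
    rwa [h0] at this
  | s1c lo α T' h1 h2 h2' h3 hrec ih =>
    obtain ⟨q, hq, rfl⟩ := hrec.exists_eq_insert_top hT le_rfl
    refine permOf_naturalWord_of_braid h2' (hN _ (Finset.mem_insert_of_mem h2)) le_rfl
      (by have := (hT.mem_iff_lt_colHeight α 1).1 h3; omega)
      (fun i hi => (hT.colHeight_insert_top_of_ne (by omega)).symm) (ih le_rfl hN)
      (hT.commute_swap_permOf_naturalWord le_rfl fun c hc hl _ => h1 c hc hl)
  | s2a lo α i j hmem hlo' hdiag hmin htop =>
    have hh : colHeight T i = j + 1 :=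
      hT.colHeight_eq (fun k hk => hT _ hmem k (by simp only; omega)) htop
    have := hT.permOf_naturalWord_insert_top (p := i) hlo' (hN _ (Finset.mem_insert_self _ _))
      (by omega) (hT.commute_swap_permOf_naturalWord (p := i) (by omega)
        fun c hc hl hci hcd => absurd (hmin c hc hl hcd) (by omega))
    rwa [hh] at this
  | s2c lo α i j T' hmem hlo' hdiag hmin _ h2 hrec ih =>
    obtain ⟨q, hq, rfl⟩ := hrec.exists_eq_insert_top hT (by omega)
    refine permOf_naturalWord_of_braid hlo' (hN _ (Finset.mem_insert_of_mem hmem)) (by omega)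
      (by have := (hT.mem_iff_lt_colHeight i (j + 2)).1 h2; omega)
      (fun k hk => (hT.colHeight_insert_top_of_ne (by omega)).symm) (ih (by omega) hN)
      (hT.commute_swap_permOf_naturalWord (p := i) (by omega)
        fun c hc hl hci hcd => absurd (hmin c hc hl hcd) (by omega))

end SlideAux

namespace SRDiagram

variable {w : List ℕ} {T : Finset Cell}

theorem isDownClosed (h : SRDiagram w T) : IsDownClosed T := by
  induction h with
  | nil => simp [IsDownClosed]
  | snoc _ ha ih =>
    obtain ⟨p, -, rfl⟩ := ha.exists_eq_insert_top ih (Nat.zero_le _)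
    exact ih.insert_top p

theorem permOf_eq_permOf_naturalWord (h : SRDiagram w T) (N : ℕ) (hN : ∀ c ∈ T, c.1 < N) :
    permOf w = permOf (naturalWord T 0 N) := by
  induction h with
  | nil => rw [show naturalWord ∅ 0 N = [] from List.flatMap_eq_nil_iff.2 fun _ _ => rfl]
  | snoc hw ha ih =>
    have hT := hw.isDownClosed
    obtain ⟨p, -, rfl⟩ := ha.exists_eq_insert_top hT (Nat.zero_le _)
    rw [permOf_append, permOf_singleton, ih fun c hc => hN c (Finset.mem_insert_of_mem hc),
      ha.permOf_naturalWord hT (Nat.zero_le _) N hN]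

end SRDiagram

theorem same_shape_implies_same_perm_general
    (w w' : List ℕ)
    (T T' : Finset Cell) (hT : SRDiagram w T) (hT' : SRDiagram w' T')
    (hshape : T = T') :
    permOf w = permOf w' := by
  subst hshape
  have hN : ∀ c ∈ T, c.1 < T.sup Prod.fst + 1 :=
    fun c hc => Nat.lt_succ_of_le (Finset.le_sup hc)
  rw [hT.permOf_eq_permOf_naturalWord _ hN, hT'.permOf_eq_permOf_naturalWord _ hN]

/-- Two words in `SRW(ℤ⁺)` of the same length whose recording
tableaux have the same shape represent the same permutation. -/
theorem same_shape_implies_same_perm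
    (w w' : List ℕ) (hw : IsPosWord w) (hw' : IsPosWord w')
    (hlen : w.length = w'.length)
    (T T' : Finset Cell) (hT : SRDiagram w T) (hT' : SRDiagram w' T')
    (hshape : T = T') :
    permOf w = permOf w' :=
  same_shape_implies_same_perm_general w w' T T' hT hT' hshape
end

section
/- Let α = α₁α₂...αₙ be a word of positive integers. The sliding and recording algorithm does not terminate on α (i.e., α ∈ SRW(ℤ⁺)) if and only if the word s_{α₁}s_{α₂}···s_{αₙ} is a reduced expression for the permutation s_[α], i.e., the Coxeter length of s_[α] equals n. -/
-- ===== auxiliary development =====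

/-- fixes everything from N on -/
def FixedFrom (σ : Equiv.Perm ℕ) (N : ℕ) : Prop := ∀ x, N ≤ x → σ x = x

lemma FixedFrom.symm {σ : Equiv.Perm ℕ} {N : ℕ} (h : FixedFrom σ N) : FixedFrom σ.symm N := by
  intro x hx
  have := h x hx
  conv_lhs => rw [← this]
  exact σ.symm_apply_apply x

lemma FixedFrom.lt {σ : Equiv.Perm ℕ} {N : ℕ} (h : FixedFrom σ N) {x : ℕ} (hx : x < N) :
    σ x < N := by
  by_contra hc
  push_neg at hc
  have := h _ hc
  have : σ (σ x) = σ x := this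
  have := σ.injective this
  omega

/-- the set of positions with value < v -/
lemma below_eq (σ : Equiv.Perm ℕ) (v : ℕ) :
    {j | σ j < v} = σ.symm '' Set.Iio v := by
  ext j
  simp only [Set.mem_setOf_eq, Set.mem_image, Set.mem_Iio]
  constructor
  · intro h; exact ⟨σ j, h, σ.symm_apply_apply j⟩
  · rintro ⟨y, hy, rfl⟩; simpa using hy

lemma below_finite (σ : Equiv.Perm ℕ) (v : ℕ) : {j | σ j < v}.Finite := by
  rw [below_eq]; exact (Set.finite_Iio v).image _

lemma below_ncard (σ : Equiv.Perm ℕ) (v : ℕ) : {j | σ j < v}.ncard = v := by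
  rw [below_eq, Set.ncard_image_of_injective _ σ.symm.injective]
  rw [← Finset.coe_range, Set.ncard_coe_finset, Finset.card_range]

lemma mid_finite (σ : Equiv.Perm ℕ) (i v : ℕ) : {j | i < j ∧ σ j < v}.Finite :=
  (below_finite σ v).subset (fun j hj => hj.2)

/-- key counting lemma -/
lemma count_key (σ : Equiv.Perm ℕ) {i v : ℕ} (hbelow : ∀ k < i, σ k < v) (hvi : v ≤ σ i) :
    i + {j | i < j ∧ σ j < v}.ncard = v := by
  have hsplit : {j | σ j < v} = Set.Iio i ∪ {j | i < j ∧ σ j < v} := by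
    ext j
    simp only [Set.mem_setOf_eq, Set.mem_union, Set.mem_Iio]
    constructor
    · intro h
      rcases lt_trichotomy j i with h1 | h1 | h1
      · exact Or.inl h1
      · subst h1; omega
      · exact Or.inr ⟨h1, h⟩
    · rintro (h | h)
      · exact hbelow j h
      · exact h.2
  have hd : Disjoint (Set.Iio i) {j | i < j ∧ σ j < v} := by
    rw [Set.disjoint_left]
    rintro j hj ⟨hj2, _⟩
    exact absurd hj2 (by simp at hj ⊢; omega)
  have h2 := below_ncard σ v
  rw [hsplit, Set.ncard_union_eq hd (Set.finite_Iio i) (mid_finite σ i v)] at h2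
  have h3 : (Set.Iio i).ncard = i := by
    rw [← Finset.coe_range, Set.ncard_coe_finset, Finset.card_range]
  omega

/-- the code of a permutation -/
noncomputable def codef (σ : Equiv.Perm ℕ) (i : ℕ) : ℕ := {j | i < j ∧ σ j < σ i}.ncard

lemma codef_eq_of_eq (σ : Equiv.Perm ℕ) {i v : ℕ} (hbelow : ∀ k < i, σ k < v) (hvi : σ i = v) :
    i + codef σ i = v := by
  unfold codef; rw [hvi]; exact count_key σ hbelow hvi.ge

lemma codef_ge (σ : Equiv.Perm ℕ) {i v : ℕ} (hbelow : ∀ k < i, σ k < v) (hvi : v ≤ σ i) :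
    v ≤ i + codef σ i := by
  have := count_key σ hbelow hvi
  have hsub : {j | i < j ∧ σ j < v} ⊆ {j | i < j ∧ σ j < σ i} :=
    fun j hj => ⟨hj.1, lt_of_lt_of_le hj.2 hvi⟩
  have := Set.ncard_le_ncard hsub (mid_finite σ i (σ i))
  unfold codef; omega

lemma codef_upper (σ : Equiv.Perm ℕ) {i v : ℕ} (hbelow : ∀ k < i, σ k < v) (hvi : σ i < v) :
    i + 1 + codef σ i ≤ v := by
  have hsub : Set.Iio (i+1) ∪ {j | i < j ∧ σ j < σ i} ⊆ {j | σ j < v} := by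
    rintro j (hj | hj)
    · simp only [Set.mem_Iio] at hj
      simp only [Set.mem_setOf_eq]
      rcases Nat.lt_succ_iff_lt_or_eq.mp hj with h | h
      · exact hbelow j h
      · subst h; exact hvi
    · exact lt_trans hj.2 hvi
  have hd : Disjoint (Set.Iio (i+1)) {j | i < j ∧ σ j < σ i} := by
    rw [Set.disjoint_left]
    rintro j hj ⟨hj2, _⟩
    simp only [Set.mem_Iio] at hj; omega
  have h1 := Set.ncard_union_eq hd (Set.finite_Iio (i+1)) (mid_finite σ i (σ i))
  have h2 := Set.ncard_le_ncard hsub (below_finite σ v)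
  rw [h1] at h2
  rw [below_ncard] at h2
  have : (Set.Iio (i+1)).ncard = i + 1 := by
    rw [← Finset.coe_range, Set.ncard_coe_finset, Finset.card_range]
  unfold codef; omega

lemma codef_zero_of_fix {σ : Equiv.Perm ℕ} {i : ℕ} (h : ∀ j, σ j < σ i → j < i) :
    codef σ i = 0 := by
  unfold codef
  rw [Set.ncard_eq_zero (mid_finite σ i (σ i))]
  ext j
  simp only [Set.mem_setOf_eq, Set.mem_empty_iff_false, iff_false, not_and]
  intro hj hj2
  exact absurd (h j hj2) (by omega)


section codestep
variable {σ : Equiv.Perm ℕ} {a : ℕ}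

/-- code change under left multiplication by adjacent transposition, ascent case -/
lemma codef_step (hpq : σ.symm a < σ.symm (a+1)) (i : ℕ) :
    codef (Equiv.swap a (a+1) * σ) i
      = if i = σ.symm a then codef σ i + 1 else codef σ i := by
  set p := σ.symm a with hp
  set q := σ.symm (a+1) with hq
  have hσp : σ p = a := σ.apply_symm_apply a
  have hσq : σ q = a + 1 := σ.apply_symm_apply (a+1)
  have hne : p ≠ q := by omega
  have happ : ∀ j, (Equiv.swap a (a+1) * σ) j = Equiv.swap a (a+1) (σ j) := fun j => rfl
  have hval : ∀ j, j ≠ p → j ≠ q → (Equiv.swap a (a+1) * σ) j = σ j := by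
    intro j h1 h2
    rw [happ, Equiv.swap_apply_of_ne_of_ne]
    · intro h; exact h1 (by rw [hp, ← h]; exact (σ.symm_apply_apply j).symm)
    · intro h; exact h2 (by rw [hq, ← h]; exact (σ.symm_apply_apply j).symm)
  have hvp : (Equiv.swap a (a+1) * σ) p = a + 1 := by rw [happ, hσp, Equiv.swap_apply_left]
  have hvq : (Equiv.swap a (a+1) * σ) q = a := by rw [happ, hσq, Equiv.swap_apply_right]
  by_cases hip : i = p
  · subst hip
    simp only [if_pos rfl]
    have hset : {j | p < j ∧ (Equiv.swap a (a+1) * σ) j < (Equiv.swap a (a+1) * σ) p}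
        = insert q {j | p < j ∧ σ j < σ p} := by
      ext j
      simp only [Set.mem_setOf_eq, Set.mem_insert_iff, hvp, hσp]
      constructor
      · rintro ⟨hj1, hj2⟩
        by_cases hjq : j = q
        · exact Or.inl hjq
        · have hjp : j ≠ p := by omega
          rw [hval j hjp hjq] at hj2
          right
          refine ⟨hj1, ?_⟩
          have : σ j ≠ a := fun h => hjp (by rw [hp, ← h]; exact (σ.symm_apply_apply j).symm)
          omega
      · rintro (rfl | ⟨hj1, hj2⟩)
        · exact ⟨hpq, by rw [hvq]; omega⟩
        · have hjp : j ≠ p := by omega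
          have hjq : j ≠ q := by
            intro h; subst h; rw [hσq] at hj2; omega
          rw [hval j hjp hjq]
          exact ⟨hj1, by omega⟩
    have hqnot : q ∉ {j | p < j ∧ σ j < σ p} := by
      simp only [Set.mem_setOf_eq, hσq, hσp]; omega
    unfold codef
    rw [hset, Set.ncard_insert_of_notMem hqnot (mid_finite σ p (σ p))]
    simp
  · simp only [if_neg hip]
    unfold codef
    congr 1
    ext j
    simp only [Set.mem_setOf_eq]
    by_cases hiq : i = q
    · subst hiq
      rw [hvq, hσq]
      constructor
      · rintro ⟨hj1, hj2⟩
        have hjp : j ≠ p := by omega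
        have hjq : j ≠ q := by omega
        rw [hval j hjp hjq] at hj2
        exact ⟨hj1, by omega⟩
      · rintro ⟨hj1, hj2⟩
        have hjp : j ≠ p := by omega
        have hjq : j ≠ q := by omega
        rw [hval j hjp hjq]
        have : σ j ≠ a := fun h => hjp (by rw [hp, ← h]; exact (σ.symm_apply_apply j).symm)
        omega
    · rw [hval i hip hiq]
      have hvne : σ i ≠ a := fun h => hip (by rw [hp, ← h]; exact (σ.symm_apply_apply i).symm)
      have hvne' : σ i ≠ a + 1 := fun h => hiq (by rw [hq, ← h]; exact (σ.symm_apply_apply i).symm)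
      constructor
      · rintro ⟨hj1, hj2⟩
        refine ⟨hj1, ?_⟩
        by_cases hjp : j = p
        · subst hjp; rw [hvp] at hj2; rw [hσp]; omega
        · by_cases hjq : j = q
          · subst hjq; rw [hvq] at hj2; rw [hσq]; omega
          · rwa [hval j hjp hjq] at hj2
      · rintro ⟨hj1, hj2⟩
        refine ⟨hj1, ?_⟩
        by_cases hjp : j = p
        · subst hjp; rw [hvp]; rw [hσp] at hj2; omega
        · by_cases hjq : j = q
          · subst hjq; rw [hvq]; rw [hσq] at hj2; omega
          · rwa [hval j hjp hjq]
end codestep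


open Classical in
/-- the renumbering function for a finite set V: elements of V are mapped to their
rank in V, elements outside V to V.card + their rank outside V. -/
noncomputable def rankFun (V : Finset ℕ) (v : ℕ) : ℕ :=
  if v ∈ V then (V.filter (· < v)).card else V.card + Nat.count (· ∉ V) v

section rankFun
variable (V : Finset ℕ)

lemma rankFun_mem {v : ℕ} (h : v ∈ V) : rankFun V v = (V.filter (· < v)).card := by
  simp [rankFun, h]

lemma rankFun_not_mem {v : ℕ} (h : v ∉ V) :
    rankFun V v = V.card + Nat.count (· ∉ V) v := by
  simp [rankFun, h]

lemma rankFun_mem_lt {v : ℕ} (h : v ∈ V) : rankFun V v < V.card := by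
  rw [rankFun_mem V h]
  apply Finset.card_lt_card
  refine ⟨Finset.filter_subset _ _, fun hsub => ?_⟩
  have := hsub h
  simp at this

lemma rankFun_not_mem_ge {v : ℕ} (h : v ∉ V) : V.card ≤ rankFun V v := by
  rw [rankFun_not_mem V h]; omega

lemma count_strict {p : ℕ → Prop} [DecidablePred p] {u v : ℕ} (huv : u < v) (hu : p u) :
    Nat.count p u < Nat.count p v := by
  have h1 : Nat.count p (u + 1) = Nat.count p u + 1 := by
    rw [Nat.count_succ, if_pos hu]
  have h2 : Nat.count p (u+1) ≤ Nat.count p v := Nat.count_monotone p huv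
  omega

lemma rankFun_strictMonoOn_mem {u v : ℕ} (hu : u ∈ V) (hv : v ∈ V) (huv : u < v) :
    rankFun V u < rankFun V v := by
  rw [rankFun_mem V hu, rankFun_mem V hv]
  apply Finset.card_lt_card
  refine ⟨fun x hx => ?_, fun hsub => ?_⟩
  · simp only [Finset.mem_filter] at hx ⊢
    exact ⟨hx.1, by omega⟩
  · have := hsub (by simp [Finset.mem_filter]; exact ⟨hu, huv⟩)
    simp at this

lemma rankFun_strictMonoOn_not_mem {u v : ℕ} (hu : u ∉ V) (hv : v ∉ V) (huv : u < v) :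
    rankFun V u < rankFun V v := by
  rw [rankFun_not_mem V hu, rankFun_not_mem V hv]
  have := count_strict (p := (· ∉ V)) huv (by simpa using hu)
  omega

lemma rankFun_injective : Function.Injective (rankFun V) := by
  intro u v huv
  by_contra hne
  rcases Nat.lt_or_ge u v with h | h
  · by_cases hu : u ∈ V <;> by_cases hv : v ∈ V
    · exact absurd huv (by have := rankFun_strictMonoOn_mem V hu hv h; omega)
    · have := rankFun_mem_lt V hu
      have := rankFun_not_mem_ge V hv
      omega
    · have := rankFun_mem_lt V hv
      have := rankFun_not_mem_ge V hu
      omega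
    · exact absurd huv (by have := rankFun_strictMonoOn_not_mem V hu hv h; omega)
  · have h' : v < u := by omega
    by_cases hu : u ∈ V <;> by_cases hv : v ∈ V
    · exact absurd huv (by have := rankFun_strictMonoOn_mem V hv hu h'; omega)
    · have := rankFun_mem_lt V hu
      have := rankFun_not_mem_ge V hv
      omega
    · have := rankFun_mem_lt V hv
      have := rankFun_not_mem_ge V hu
      omega
    · exact absurd huv (by have := rankFun_strictMonoOn_not_mem V hv hu h'; omega)

lemma compl_infinite : {x | x ∉ V}.Infinite := by
  have : {x | x ∉ V} = (↑V : Set ℕ)ᶜ := by ext x; simp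
  rw [this]
  exact V.finite_toSet.infinite_compl

lemma rankFun_surjective : Function.Surjective (rankFun V) := by
  intro y
  rcases Nat.lt_or_ge y V.card with hy | hy
  · -- image of V under rankFun is exactly range V.card
    have himg : V.image (rankFun V) = Finset.range V.card := by
      apply Finset.eq_of_subset_of_card_le
      · intro x hx
        simp only [Finset.mem_image] at hx
        obtain ⟨v, hv, rfl⟩ := hx
        simp only [Finset.mem_range]
        exact rankFun_mem_lt V hv
      · rw [Finset.card_range, Finset.card_image_of_injective _ (rankFun_injective V)]
    have : y ∈ V.image (rankFun V) := by rw [himg]; simp [hy]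
    simp only [Finset.mem_image] at this
    obtain ⟨v, _, hv⟩ := this
    exact ⟨v, hv⟩
  · refine ⟨Nat.nth (· ∉ V) (y - V.card), ?_⟩
    have hmem : Nat.nth (· ∉ V) (y - V.card) ∉ V := by
      have := Nat.nth_mem_of_infinite (p := (· ∉ V)) (compl_infinite V) (y - V.card)
      simpa using this
    rw [rankFun_not_mem V hmem, Nat.count_nth_of_infinite (compl_infinite V)]
    omega

/-- the renumbering permutation -/
noncomputable def rankPerm : Equiv.Perm ℕ :=
  Equiv.ofBijective (rankFun V) ⟨rankFun_injective V, rankFun_surjective V⟩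

lemma rankPerm_apply (v : ℕ) : rankPerm V v = rankFun V v := rfl

lemma count_not_mem_eq {v : ℕ} (hsub : ∀ u ∈ V, u < v) :
    Nat.count (· ∉ V) v = v - V.card := by
  have h1 : Nat.count (· ∉ V) v = ((Finset.range v).filter (· ∉ V)).card :=
    Nat.count_eq_card_filter_range _ _
  have h2 : ((Finset.range v).filter (· ∈ V)).card = V.card := by
    congr 1
    apply Finset.Subset.antisymm
    · intro x hx; exact (Finset.mem_filter.mp hx).2
    · intro x hx
      simp only [Finset.mem_filter, Finset.mem_range]
      exact ⟨hsub x hx, hx⟩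
  have h3 := Finset.card_filter_add_card_filter_not
    (s := Finset.range v) (p := (· ∈ V))
  rw [Finset.card_range] at h3
  beta_reduce at h3
  omega

lemma rankFun_fixed {v : ℕ} (hsub : ∀ u ∈ V, u < v) : rankFun V v = v := by
  have hv : v ∉ V := fun h => by have := hsub v h; omega
  rw [rankFun_not_mem V hv, count_not_mem_eq V hsub]
  have : V.card ≤ v := by
    have := Finset.card_le_card (s := V) (t := Finset.range v) (by
      intro x hx; simp only [Finset.mem_range]; exact hsub x hx)
    simpa using this
  omega

/-- count of elements not in V strictly below v -/
lemma rankFun_not_mem_eq_card {v : ℕ} (h : v ∉ V) :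
    rankFun V v = V.card + v - (V.filter (· < v)).card := by
  rw [rankFun_not_mem V h]
  have h1 : Nat.count (· ∉ V) v = ((Finset.range v).filter (· ∉ V)).card :=
    Nat.count_eq_card_filter_range _ _
  have h2 : ((Finset.range v).filter (· ∈ V)).card = (V.filter (· < v)).card := by
    congr 1
    ext x
    simp only [Finset.mem_filter, Finset.mem_range]
    tauto
  have h3 := Finset.card_filter_add_card_filter_not
    (s := Finset.range v) (p := (· ∈ V))
  rw [Finset.card_range] at h3
  beta_reduce at h3
  have h4 : (V.filter (· < v)).card ≤ V.card := Finset.card_filter_le _ _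
  omega

end rankFun


/-- inversion set -/
def invSet (ω : Equiv.Perm ℕ) : Set (ℕ × ℕ) := {p | p.1 < p.2 ∧ ω p.2 < ω p.1}

noncomputable def invN (ω : Equiv.Perm ℕ) : ℕ := (invSet ω).ncard

lemma invSet_finite {ω : Equiv.Perm ℕ} {N : ℕ} (h : FixedFrom ω N) : (invSet ω).Finite := by
  apply (Set.finite_Iio N |>.prod (Set.finite_Iio N)).subset
  rintro ⟨i, j⟩ ⟨h1, h2⟩
  simp only [Set.mem_prod, Set.mem_Iio] at *
  have hjN : j < N := by
    by_contra hc
    push_neg at hc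
    rw [h j hc] at h2
    rcases Nat.lt_or_ge i N with hi | hi
    · exact absurd (h.lt hi) (by omega)
    · rw [h i hi] at h2; omega
  exact ⟨by omega, hjN⟩

lemma swap_keeps_lt {a i j : ℕ} (hij : i < j) (hne : ¬(i = a ∧ j = a + 1)) :
    Equiv.swap a (a+1) i < Equiv.swap a (a+1) j := by
  simp only [Equiv.swap_apply_def]
  split_ifs <;> omega

/-- step lemma for inversion number -/
lemma invN_step (ω : Equiv.Perm ℕ) (N a : ℕ) (h : FixedFrom ω N) :
    (ω a < ω (a+1) ∧ invN (ω * Equiv.swap a (a+1)) = invN ω + 1)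
    ∨ (ω (a+1) < ω a ∧ invN ω = invN (ω * Equiv.swap a (a+1)) + 1) := by
  classical
  set ω' := ω * Equiv.swap a (a+1) with hω'
  have happ : ∀ x, ω' x = ω (Equiv.swap a (a+1) x) := fun x => rfl
  have h' : FixedFrom ω' (max N (a+2)) := by
    intro x hx
    rw [happ, Equiv.swap_apply_of_ne_of_ne (by omega) (by omega)]
    exact h x (by omega)
  have key : ∀ (f g : Equiv.Perm ℕ), (∀ x, g x = f (Equiv.swap a (a+1) x)) →
      Set.BijOn (fun p : ℕ×ℕ => (Equiv.swap a (a+1) p.1, Equiv.swap a (a+1) p.2))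
        (invSet g \ {(a, a+1)}) (invSet f \ {(a, a+1)}) := by
    intro f g hg
    refine ⟨?_, ?_, ?_⟩
    · rintro ⟨i, j⟩ ⟨⟨h1, h2⟩, h3⟩
      simp only [Set.mem_singleton_iff, Prod.mk.injEq, not_and] at h3
      have hne : ¬(i = a ∧ j = a + 1) := by
        rintro ⟨rfl, rfl⟩; exact (h3 rfl rfl).elim
      simp only [invSet, Set.mem_diff, Set.mem_setOf_eq, Set.mem_singleton_iff,
        Prod.mk.injEq, not_and]
      refine ⟨⟨swap_keeps_lt h1 hne, ?_⟩, ?_⟩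
      · rw [← hg i, ← hg j]; exact h2
      · intro hi hj
        have hi2 := congrArg (Equiv.swap a (a+1)) hi
        have hj2 := congrArg (Equiv.swap a (a+1)) hj
        rw [Equiv.swap_apply_self, Equiv.swap_apply_left] at hi2
        rw [Equiv.swap_apply_self, Equiv.swap_apply_right] at hj2
        omega
    · rintro ⟨i, j⟩ _ ⟨k, l⟩ _ hkl
      simp only [Prod.mk.injEq] at hkl
      have e1 := (Equiv.swap a (a+1)).injective hkl.1
      have e2 := (Equiv.swap a (a+1)).injective hkl.2
      simp [e1, e2]
    · rintro ⟨i, j⟩ ⟨⟨h1, h2⟩, h3⟩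
      simp only [Set.mem_singleton_iff, Prod.mk.injEq, not_and] at h3
      refine ⟨(Equiv.swap a (a+1) i, Equiv.swap a (a+1) j), ?_, ?_⟩
      · have hne : ¬(i = a ∧ j = a + 1) := by rintro ⟨rfl, rfl⟩; exact (h3 rfl rfl).elim
        simp only [invSet, Set.mem_diff, Set.mem_setOf_eq, Set.mem_singleton_iff,
          Prod.mk.injEq, not_and]
        refine ⟨⟨swap_keeps_lt h1 hne, ?_⟩, ?_⟩
        · rw [hg, hg, Equiv.swap_apply_self, Equiv.swap_apply_self]
          exact h2
        · intro hi hj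
          have hi2 := congrArg (Equiv.swap a (a+1)) hi
          have hj2 := congrArg (Equiv.swap a (a+1)) hj
          rw [Equiv.swap_apply_self, Equiv.swap_apply_left] at hi2
          rw [Equiv.swap_apply_self, Equiv.swap_apply_right] at hj2
          omega
      · simp [Equiv.swap_apply_self]
  have hbij := key ω ω' happ
  have hbij' : Set.BijOn (fun p : ℕ×ℕ => (Equiv.swap a (a+1) p.1, Equiv.swap a (a+1) p.2))
      (invSet ω \ {(a, a+1)}) (invSet ω' \ {(a, a+1)}) := by
    apply key
    intro x
    rw [happ, Equiv.swap_apply_self]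
  have hcard : (invSet ω' \ {(a, a+1)}).ncard = (invSet ω \ {(a, a+1)}).ncard := by
    rw [← hbij.image_eq]
    exact (Set.ncard_image_of_injOn hbij.injOn).symm
  have hfin : (invSet ω).Finite := invSet_finite h
  have hfin' : (invSet ω').Finite := invSet_finite h'
  have hmem' : (a, a+1) ∈ invSet ω' ↔ ω a < ω (a+1) := by
    simp only [invSet, Set.mem_setOf_eq, happ, Equiv.swap_apply_left, Equiv.swap_apply_right]
    constructor <;> intro hh <;> [exact hh.2; exact ⟨by omega, hh⟩]
  have hmem : (a, a+1) ∈ invSet ω ↔ ω (a+1) < ω a := by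
    simp only [invSet, Set.mem_setOf_eq]
    constructor <;> intro hh <;> [exact hh.2; exact ⟨by omega, hh⟩]
  have htric : ω a < ω (a+1) ∨ ω (a+1) < ω a := by
    rcases lt_trichotomy (ω a) (ω (a+1)) with h1 | h1 | h1
    · exact Or.inl h1
    · exact absurd (ω.injective h1) (by omega)
    · exact Or.inr h1
  have split : ∀ (f : Equiv.Perm ℕ), (invSet f).Finite →
      (invSet f).ncard = (invSet f \ {(a, a+1)}).ncard + (if (a,a+1) ∈ invSet f then 1 else 0) := by
    intro f hf
    by_cases hm : (a,a+1) ∈ invSet f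
    · rw [if_pos hm]
      have he : invSet f = insert (a,a+1) (invSet f \ {(a,a+1)}) := by
        rw [Set.insert_diff_singleton, Set.insert_eq_of_mem hm]
      conv_lhs => rw [he]
      rw [Set.ncard_insert_of_notMem (by simp) hf.diff]
    · rw [if_neg hm, Set.diff_singleton_eq_self hm, add_zero]
  have s1 := split ω hfin
  have s2 := split ω' hfin'
  clear hbij hbij' key
  rcases htric with hlt | hlt
  · left
    refine ⟨hlt, ?_⟩
    rw [if_pos (hmem'.mpr hlt)] at s2
    rw [if_neg (by rw [hmem]; omega)] at s1
    unfold invN; omega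
  · right
    refine ⟨hlt, ?_⟩
    rw [if_neg (by rw [hmem']; omega)] at s2
    rw [if_pos (hmem.mpr hlt)] at s1
    unfold invN; omega


lemma permOf_nil : permOf [] = 1 := rfl

lemma permOf_append_s10 (w : List ℕ) (a : ℕ) :
    permOf (w ++ [a]) = permOf w * Equiv.swap a (a+1) := by
  unfold permOf
  rw [List.map_append, List.prod_append]
  simp

lemma permOf_fixedFrom (w : List ℕ) : ∃ N, FixedFrom (permOf w) N := by
  induction w with
  | nil => exact ⟨0, fun x _ => rfl⟩
  | cons a w ih =>
    obtain ⟨N, hN⟩ := ih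
    refine ⟨max N (a+2), fun x hx => ?_⟩
    have : permOf (a :: w) x = Equiv.swap a (a+1) (permOf w x) := by
      unfold permOf
      simp [List.prod_cons]
    rw [this, hN x (by omega), Equiv.swap_apply_of_ne_of_ne (by omega) (by omega)]

lemma permOf_zero {w : List ℕ} (hw : IsPosWord w) : permOf w 0 = 0 := by
  induction w with
  | nil => rfl
  | cons a w ih =>
    have ha : 1 ≤ a := hw a (by simp)
    have hw' : IsPosWord w := fun b hb => hw b (by simp [hb])
    have : permOf (a :: w) 0 = Equiv.swap a (a+1) (permOf w 0) := by
      unfold permOf; simp [List.prod_cons]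
    rw [this, ih hw', Equiv.swap_apply_of_ne_of_ne (by omega) (by omega)]

lemma strictMono_perm_eq_one {ω : Equiv.Perm ℕ} (h : StrictMono ω) : ω = 1 := by
  have h1 : ∀ x, x ≤ ω x := fun x => h.le_apply
  have h2 : ∀ x, ω x ≤ x := by
    intro x
    have hmono : StrictMono (ω⁻¹ : Equiv.Perm ℕ) := by
      intro i j hij
      rcases lt_trichotomy ((ω⁻¹ : Equiv.Perm ℕ) i) ((ω⁻¹ : Equiv.Perm ℕ) j) with hh | hh | hh
      · exact hh
      · exact absurd (congrArg ω hh) (by simp; omega)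
      · have := h hh
        simp at this
        omega
    have := hmono.le_apply (x := ω x)
    simpa using this
  ext x
  have := h1 x
  have := h2 x
  simp only [Equiv.Perm.coe_one, id_eq]
  omega

lemma invN_eq_zero {ω : Equiv.Perm ℕ} {N : ℕ} (hfix : FixedFrom ω N) (h : invN ω = 0) :
    ω = 1 := by
  have hemp : invSet ω = ∅ := by
    rw [← Set.ncard_eq_zero (invSet_finite hfix)]
    exact h
  have hmono : StrictMono ω := by
    intro i j hij
    rcases lt_trichotomy (ω i) (ω j) with hh | hh | hh
    · exact hh
    · exact absurd (ω.injective hh) (by omega)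
    · exfalso
      have : (i, j) ∈ invSet ω := ⟨hij, hh⟩
      rw [hemp] at this
      exact this
  exact strictMono_perm_eq_one hmono

lemma descent_exists {ω : Equiv.Perm ℕ} {N : ℕ} (hfix : FixedFrom ω N) (h0 : ω 0 = 0)
    (h : invN ω ≠ 0) : ∃ a, 1 ≤ a ∧ ω (a+1) < ω a := by
  by_contra hc
  push_neg at hc
  apply h
  have hmono : StrictMono ω := by
    have hstep : ∀ a, ω a < ω (a+1) := by
      intro a
      rcases Nat.eq_zero_or_pos a with rfl | ha
      · rw [h0]
        have h1 : ω 1 ≠ 0 := fun hh => by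
          have := ω.injective (hh.trans h0.symm); omega
        simpa using Nat.pos_of_ne_zero h1
      · have := hc a ha
        rcases lt_trichotomy (ω a) (ω (a+1)) with hh | hh | hh
        · exact hh
        · exact absurd (ω.injective hh) (by omega)
        · omega
    exact strictMono_nat_of_lt_succ hstep
  rw [strictMono_perm_eq_one hmono]
  have : invSet (1 : Equiv.Perm ℕ) = ∅ := by
    ext ⟨i, j⟩
    simp only [invSet, Set.mem_setOf_eq, Set.mem_empty_iff_false, iff_false, not_and]
    intro hij
    simp
    omega
  unfold invN
  rw [this]
  simp

lemma invN_le_length {w : List ℕ} : invN (permOf w) ≤ w.length := by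
  induction w using List.reverseRecOn with
  | nil =>
    have : invN (permOf []) = 0 := by
      have : invSet (1 : Equiv.Perm ℕ) = ∅ := by
        ext ⟨i, j⟩
        simp only [invSet, Set.mem_setOf_eq, Set.mem_empty_iff_false, iff_false, not_and]
        intro hij
        simp
        omega
      unfold invN
      rw [permOf_nil, this]
      simp
    simp [this]
  | append_singleton w a ih =>
    obtain ⟨N, hN⟩ := permOf_fixedFrom w
    rcases invN_step (permOf w) N a hN with ⟨_, he⟩ | ⟨_, he⟩ <;>
      rw [permOf_append_s10] <;> simp [List.length_append] <;> omega

/-- existence of a word of length invN -/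
lemma word_of_invN {ω : Equiv.Perm ℕ} {N : ℕ} (hfix : FixedFrom ω N) (h0 : ω 0 = 0) :
    ∃ w : List ℕ, IsPosWord w ∧ permOf w = ω ∧ w.length = invN ω := by
  generalize hn : invN ω = n
  induction n generalizing ω N with
  | zero =>
    refine ⟨[], fun a ha => by simp at ha, ?_, by simp⟩
    rw [permOf_nil, invN_eq_zero hfix hn]
  | succ n ih =>
    obtain ⟨a, ha, hdes⟩ := descent_exists hfix h0 (by omega)
    set ω' := ω * Equiv.swap a (a+1) with hω'
    have hstep := invN_step ω N a hfix
    rw [← hω'] at hstep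
    rcases hstep with ⟨hh, _⟩ | ⟨_, he⟩
    · omega
    · have hfix' : FixedFrom ω' (max N (a+2)) := by
        intro x hx
        have : ω' x = ω (Equiv.swap a (a+1) x) := rfl
        rw [this, Equiv.swap_apply_of_ne_of_ne (by omega) (by omega)]
        exact hfix x (by omega)
      have h0' : ω' 0 = 0 := by
        have : ω' 0 = ω (Equiv.swap a (a+1) 0) := rfl
        rw [this, Equiv.swap_apply_of_ne_of_ne (by omega) (by omega), h0]
      obtain ⟨w, hw1, hw2, hw3⟩ := ih hfix' h0' (by omega)
      refine ⟨w ++ [a], ?_, ?_, ?_⟩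
      · intro b hb
        rcases List.mem_append.mp hb with hb | hb
        · exact hw1 b hb
        · simp at hb; omega
      · rw [permOf_append_s10, hw2, hω']
        rw [mul_assoc, Equiv.swap_mul_self, mul_one]
      · simp only [List.length_append, List.length_cons, List.length_nil, hw3]


lemma reduced_iff_invN {w : List ℕ} (hw : IsPosWord w) :
    IsReducedWord w ↔ invN (permOf w) = w.length := by
  constructor
  · rintro ⟨-, hmin⟩
    obtain ⟨N, hN⟩ := permOf_fixedFrom w
    obtain ⟨w₀, h1, h2, h3⟩ := word_of_invN hN (permOf_zero hw)
    have := hmin w₀ h1 h2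
    have := invN_le_length (w := w)
    omega
  · intro h
    refine ⟨hw, fun w' hw' hperm => ?_⟩
    have := invN_le_length (w := w')
    rw [hperm] at this
    omega


/-- transfer lemma: the slide only depends on the part of the diagram in columns ≥ lo -/
lemma slide_transfer {T S : Finset Cell} {lo a : ℕ} {T' : Finset Cell}
    (hd : SlideAux T lo a T') (hla : lo ≤ a)
    (hagree : ∀ c : Cell, lo ≤ c.1 → (c ∈ T ↔ c ∈ S)) :
    ∃ c : Cell, lo ≤ c.1 ∧ c ∉ T ∧ T' = insert c T ∧ SlideAux S lo a (insert c S) := by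
  induction hd with
  | s1a lo α h1 h2 =>
    have hnotm : (α, 0) ∉ T := fun hm => (h2 _ hm hla) rfl
    refine ⟨(α, 0), hla, hnotm, rfl, ?_⟩
    exact SlideAux.s1a lo α
      (fun c hc hlc => h1 c ((hagree c hlc).mpr hc) hlc)
      (fun c hc hlc => h2 c ((hagree c hlc).mpr hc) hlc)
  | s1c lo α T' h1 h2 h2' h3 hrec ih =>
    obtain ⟨c, hc1, hc2, hc3, hc4⟩ := ih (by omega)
      (fun c hc => hagree c (by omega))
    exact ⟨c, by omega, hc2, hc3,
      SlideAux.s1c lo α _ (fun c hc hlc => h1 c ((hagree c hlc).mpr hc) hlc)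
        ((hagree _ h2').mp h2) h2' ((hagree _ h2').mp h3) hc4⟩
  | s2a lo α i j hmem hlo hdiag hmin htop =>
    refine ⟨(i, j+1), hlo, htop, rfl, ?_⟩
    exact SlideAux.s2a lo α i j ((hagree _ hlo).mp hmem) hlo hdiag
      (fun c hc hlc => hmin c ((hagree c hlc).mpr hc) hlc)
      (fun hm => htop ((hagree _ hlo).mpr hm))
  | s2c lo α i j T' hmem hlo hdiag hmin h1 h2 hrec ih =>
    obtain ⟨c, hc1, hc2, hc3, hc4⟩ := ih (by omega)
      (fun c hc => hagree c (by omega))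
    exact ⟨c, by omega, hc2, hc3,
      SlideAux.s2c lo α i j _ ((hagree _ hlo).mp hmem) hlo hdiag
        (fun c hc hlc => hmin c ((hagree c hlc).mpr hc) hlc)
        ((hagree _ hlo).mp h1) ((hagree _ hlo).mp h2) hc4⟩


lemma insert_eq_insert {A : Finset Cell} {c d : Cell} (hc : c ∉ A)
    (h : insert d A = insert c A) : c = d := by
  have hm : c ∈ insert d A := by rw [h]; exact Finset.mem_insert_self c A
  rcases Finset.mem_insert.mp hm with h' | h'
  · exact h'
  · exact absurd h' hc

/-- THE MAIN LEMMA -/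
lemma slide_main (fuel : ℕ) : ∀ (σ : Equiv.Perm ℕ) (N lo a : ℕ) (T : Finset Cell),
    FixedFrom σ N → N ≤ a + fuel → 1 ≤ a → lo ≤ a →
    (∀ k, k < max lo 1 → σ k < max lo 1) →
    (∀ c : Cell, c ∈ T → lo ≤ c.1) →
    (∀ i j : ℕ, lo ≤ i → ((i, j) ∈ T ↔ j < codef σ i)) →
    ((∀ T', SlideAux T lo a T' →
        σ.symm a < σ.symm (a+1) ∧ T' = insert (σ.symm a, codef σ (σ.symm a)) T)
      ∧ (σ.symm a < σ.symm (a+1) →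
        SlideAux T lo a (insert (σ.symm a, codef σ (σ.symm a)) T))) := by
  induction fuel using Nat.strong_induction_on with
  | _ fuel ih =>
  intro σ N lo a T hfix hNf ha hloa hlow hTlo hTcode
  set p := σ.symm a with hp
  set q := σ.symm (a+1) with hq
  have hσp : σ p = a := σ.apply_symm_apply a
  have hσq : σ q = a + 1 := σ.apply_symm_apply (a+1)
  have hm₀a : max lo 1 ≤ a := by omega
  have hpm₀ : max lo 1 ≤ p := by
    by_contra hc
    push_neg at hc
    have := hlow p hc
    omega
  have hqm₀ : max lo 1 ≤ q := by
    by_contra hc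
    push_neg at hc
    have := hlow q hc
    omega
  have hpq_ne : p ≠ q := fun h => by rw [h, hσq] at hσp; omega
  have hex : ∃ i, max lo 1 ≤ i ∧ a ≤ σ i := ⟨p, hpm₀, hσp.ge⟩
  set m := Nat.find hex with hm
  obtain ⟨hmm₀, hma⟩ := Nat.find_spec hex
  rw [← hm] at hmm₀ hma
  have hminm : ∀ k, max lo 1 ≤ k → k < m → σ k < a := by
    intro k h1 h2
    have := Nat.find_min hex h2
    push_neg at this
    exact this h1
  have hbelow : ∀ k, k < m → σ k < a := by
    intro k hk
    rcases Nat.lt_or_ge k (max lo 1) with h3 | h3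
    · exact lt_of_lt_of_le (hlow k h3) hm₀a
    · exact hminm k h3 hk
  have hma' : m ≤ a := by
    by_contra hc
    push_neg at hc
    have himg : (Finset.range (a+1)).image σ ⊆ Finset.range a := by
      intro x hx
      simp only [Finset.mem_image, Finset.mem_range] at hx ⊢
      obtain ⟨k, hk, rfl⟩ := hx
      exact hbelow k (by omega)
    have hcard := Finset.card_le_card himg
    rw [Finset.card_image_of_injective _ σ.injective, Finset.card_range,
      Finset.card_range] at hcard
    omega
  have hmp : m ≤ p := Nat.find_min' hex ⟨hpm₀, hσp.ge⟩
  have hmq : m ≤ q := Nat.find_min' hex ⟨hqm₀, by omega⟩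
  have hlom : lo ≤ m := le_trans (le_max_left lo 1) hmm₀
  have hlowcode : ∀ k, lo ≤ k → k < m → codef σ k + k + 1 ≤ a := by
    intro k h1 h2
    rcases Nat.lt_or_ge k (max lo 1) with h3 | h3
    · have hk0 : k = 0 := by omega
      subst hk0
      have hσ0 : σ 0 = 0 := by have := hlow 0 h3; omega
      have : codef σ 0 = 0 := codef_zero_of_fix (fun j hj => by rw [hσ0] at hj; omega)
      omega
    · have := codef_upper σ (fun j hj => hbelow j (by omega)) (hbelow k h2)
      omega
  have hcell : ∀ i j : ℕ, (i, j) ∈ T ↔ (lo ≤ i ∧ j < codef σ i) := by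
    intro i j
    constructor
    · intro h
      exact ⟨hTlo _ h, (hTcode i j (hTlo _ h)).mp h⟩
    · rintro ⟨h1, h2⟩
      exact (hTcode i j h1).mpr h2
  have hdiagcol : ∀ c : Cell, c ∈ T → lo ≤ c.1 → c.1 + c.2 + 1 = a → m ≤ c.1 := by
    rintro ⟨i, j⟩ hmem hl hd
    by_contra hc
    push_neg at hc
    have h1 := hlowcode i hl hc
    have h2 := (hcell i j).mp hmem
    simp only at hd
    omega
  have htri : σ m = a ∨ σ m = a + 1 ∨ a + 2 ≤ σ m := by omega
  rcases htri with hσm | hσm | hσm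
  -- ===================== CASE 1 : σ m = a =====================
  · have hpm : p = m := σ.injective (by rw [hσp, hσm])
    have hcm : m + codef σ m = a := codef_eq_of_eq σ hbelow hσm
    have hplq : p < q := by omega
    have hcellEq : (σ.symm a, codef σ (σ.symm a)) = ((m : ℕ), a - m) := by
      rw [← hp, hpm]
      have : codef σ m = a - m := by omega
      rw [this]
    rcases Nat.lt_or_ge m a with hcase | hcase
    · -- m < a : rule s2a
      have hmem : ((m : ℕ), a - m - 1) ∈ T := by
        rw [hcell]; exact ⟨hlom, by omega⟩
      have htop : ((m : ℕ), a - m) ∉ T := by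
        rw [hcell]; push_neg; intro _; omega
      constructor
      · intro T' hd
        cases hd with
        | s1a _ _ h1 h2 => exact absurd (h1 _ hmem hlom) (by simp; omega)
        | s1c _ _ _ h1 h2 h2' h3 hrec => exact absurd (h1 _ hmem hlom) (by simp; omega)
        | s2a _ _ i j hmem' hlo' hdiag' hmin' htop' =>
          have him : i = m := le_antisymm (hmin' _ hmem hlom (by simp; omega))
            (hdiagcol _ hmem' hlo' hdiag')
          subst him
          have hj : j = a - m - 1 := by omega
          subst hj
          refine ⟨hplq, ?_⟩
          rw [hcellEq]
          congr 1
          simp only [Prod.mk.injEq, true_and]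
          omega
        | s2c _ _ i j _ hmem' hlo' hdiag' hmin' h1 h2 hrec =>
          have him : i = m := le_antisymm (hmin' _ hmem hlom (by simp; omega))
            (hdiagcol _ hmem' hlo' hdiag')
          subst him
          have hj : j = a - m - 1 := by omega
          subst hj
          exact absurd h1 (by rw [show a - m - 1 + 1 = a - m by omega]; exact htop)
      · intro _
        rw [hcellEq]
        have := SlideAux.s2a (T := T) lo a m (a - m - 1) hmem hlom (by omega)
          (fun c hc hl hd => hdiagcol c hc hl hd) (by rw [show a-m-1+1 = a-m by omega]; exact htop)
        rw [show a - m - 1 + 1 = a - m by omega] at this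
        exact this
    · -- m = a : rule s1a
      have hmeq : m = a := by omega
      have hca : codef σ m = 0 := by omega
      have hnodiag : ∀ c ∈ T, lo ≤ c.1 → c.1 + c.2 + 1 ≠ a := by
        intro c hc hl hd
        have := hdiagcol c hc hl hd
        omega
      have hnosum : ∀ c ∈ T, lo ≤ c.1 → c.1 + c.2 ≠ a := by
        rintro ⟨i, j⟩ hcmem hl hd
        simp only at hd
        have hj := (hcell i j).mp hcmem
        rcases Nat.lt_or_ge i m with h3 | h3
        · have := hlowcode i hl h3
          omega
        · have hieq : i = m := by omega
          subst hieq
          omega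
      constructor
      · intro T' hd
        cases hd with
        | s1a _ _ h1 h2 =>
          refine ⟨hplq, ?_⟩
          rw [hcellEq]
          congr 1
          simp only [Prod.mk.injEq, true_and]
          omega
        | s1c _ _ _ h1 h2 h2' h3 hrec =>
          rw [← hmeq, hcell] at h2
          omega
        | s2a _ _ i j hmem' hlo' hdiag' hmin' htop' =>
          exact absurd hdiag' (hnodiag _ hmem' hlo')
        | s2c _ _ i j _ hmem' hlo' hdiag' hmin' h1 h2 hrec =>
          exact absurd hdiag' (hnodiag _ hmem' hlo')
      · intro _
        rw [hcellEq]
        have := SlideAux.s1a (T := T) lo a hnodiag hnosum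
        have hconv : ((a : ℕ), 0) = ((m : ℕ), a - m) := by
          simp only [Prod.mk.injEq]; omega
        rwa [hconv] at this
  -- ===================== CASE 2 : σ m = a + 1 =====================
  · have hqm : q = m := σ.injective (by rw [hσq, hσm])
    have hpgt : q < p := by omega
    have hcm : m + codef σ m = a + 1 :=
      codef_eq_of_eq σ (fun k hk => lt_trans (hbelow k hk) (by omega)) hσm
    have hforward : ∀ T', SlideAux T lo a T' → False := by
      intro T' hd
      rcases Nat.lt_or_ge m a with hcase | hcase
      · have hmem : ((m : ℕ), a - m - 1) ∈ T := by
          rw [hcell]; exact ⟨hlom, by omega⟩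
        have hmem2 : ((m : ℕ), a - m) ∈ T := by
          rw [hcell]; exact ⟨hlom, by omega⟩
        have hmem3 : ((m : ℕ), a - m + 1) ∉ T := by
          rw [hcell]; push_neg; intro _; omega
        cases hd with
        | s1a _ _ h1 h2 => exact absurd (h1 _ hmem hlom) (by simp; omega)
        | s1c _ _ _ h1 h2 h2' h3 hrec => exact absurd (h1 _ hmem hlom) (by simp; omega)
        | s2a _ _ i j hmem' hlo' hdiag' hmin' htop' =>
          have him : i = m := le_antisymm (hmin' _ hmem hlom (by simp; omega))
            (hdiagcol _ hmem' hlo' hdiag')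
          subst him
          have hj : j = a - m - 1 := by omega
          subst hj
          exact htop' (by rw [show a-m-1+1 = a-m by omega]; exact hmem2)
        | s2c _ _ i j _ hmem' hlo' hdiag' hmin' h1 h2 hrec =>
          have him : i = m := le_antisymm (hmin' _ hmem hlom (by simp; omega))
            (hdiagcol _ hmem' hlo' hdiag')
          subst him
          have hj : j = a - m - 1 := by omega
          subst hj
          exact hmem3 (by rw [show a-m-1+2 = a-m+1 by omega] at h2; exact h2)
      · have hmeq : m = a := by omega
        have hca : codef σ m = 1 := by omega
        have hnodiag : ∀ c ∈ T, lo ≤ c.1 → c.1 + c.2 + 1 ≠ a := by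
          intro c hc hl hd
          have := hdiagcol c hc hl hd
          omega
        cases hd with
        | s1a _ _ h1 h2 =>
          exact (h2 (m, 0) (by rw [hcell]; exact ⟨hlom, by omega⟩) hlom) (by simp; omega)
        | s1c _ _ _ h1 h2 h2' h3 hrec =>
          rw [show ((a : ℕ), 1) = ((m : ℕ), 1) by rw [hmeq], hcell] at h3
          omega
        | s2a _ _ i j hmem' hlo' hdiag' hmin' htop' =>
          exact absurd hdiag' (hnodiag _ hmem' hlo')
        | s2c _ _ i j _ hmem' hlo' hdiag' hmin' h1 h2 hrec =>
          exact absurd hdiag' (hnodiag _ hmem' hlo')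
    constructor
    · intro T' hd
      exact absurd (hforward T' hd) (by simp)
    · intro hcond
      omega
  -- ===================== CASE 3 : σ m ≥ a + 2 =====================
  · have hpm : m < p := by
      rcases Nat.lt_or_ge m p with h | h
      · exact h
      · have hh : p = m := by omega
        rw [hh] at hσp
        omega
    have hqm' : m < q := by
      rcases Nat.lt_or_ge m q with h | h
      · exact h
      · have hh : q = m := by omega
        rw [hh] at hσq
        omega
    have hcm : a + 2 ≤ m + codef σ m :=
      codef_ge σ (fun k hk => lt_trans (hbelow k hk) (by omega)) hσm
    have hfuel : 1 ≤ fuel := by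
      by_contra hc
      push_neg at hc
      have hf0 : N ≤ a := by omega
      rcases Nat.lt_or_ge m N with h | h
      · have := hfix.lt h
        omega
      · have := hfix m h
        omega
    -- the flattened permutation
    set V := (Finset.range (m+1)).image σ with hV
    have hVcard : V.card = m + 1 := by
      rw [hV, Finset.card_image_of_injective _ σ.injective, Finset.card_range]
    have hVmem : ∀ x, σ x ∈ V ↔ x ≤ m := by
      intro x
      rw [hV]
      simp only [Finset.mem_image, Finset.mem_range]
      constructor
      · rintro ⟨k, hk, hke⟩
        have := σ.injective hke
        omega
      · intro hx
        exact ⟨x, by omega, rfl⟩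
    set τ := rankPerm V * σ with hτ
    have hτapp : ∀ x, τ x = rankFun V (σ x) := by
      intro x
      rw [hτ]
      simp only [Equiv.Perm.mul_apply]
      exact rankPerm_apply V (σ x)
    have hNV : ∀ v ∈ V, v < max N (m+1) := by
      intro v hv
      rw [hV] at hv
      simp only [Finset.mem_image, Finset.mem_range] at hv
      obtain ⟨k, hk, rfl⟩ := hv
      rcases Nat.lt_or_ge k N with h | h
      · have := hfix.lt h
        omega
      · have := hfix k h
        omega
    have hτfix : FixedFrom τ (max N (m+1)) := by
      intro x hx
      rw [hτapp, hfix x (by omega)]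
      exact rankFun_fixed V (fun u hu => lt_of_lt_of_le (hNV u hu) hx)
    have hτlow : ∀ k, k < m + 1 → τ k < m + 1 := by
      intro k hk
      rw [hτapp]
      have := rankFun_mem_lt V ((hVmem k).mpr (by omega))
      omega
    have hτnotV : ∀ x, m + 1 ≤ x → σ x ∉ V := by
      intro x hx hvv
      have := (hVmem x).mp hvv
      omega
    have hτmono : ∀ x y, m + 1 ≤ x → m + 1 ≤ y → (τ x < τ y ↔ σ x < σ y) := by
      intro x y hx hy
      constructor
      · intro h
        rcases lt_trichotomy (σ x) (σ y) with h' | h' | h'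
        · exact h'
        · rw [hτapp, hτapp, h'] at h
          omega
        · have := rankFun_strictMonoOn_not_mem V (hτnotV y hy) (hτnotV x hx) h'
          rw [hτapp, hτapp] at h
          omega
      · intro h
        rw [hτapp, hτapp]
        exact rankFun_strictMonoOn_not_mem V (hτnotV x hx) (hτnotV y hy) h
    have hτcode : ∀ i, m + 1 ≤ i → codef τ i = codef σ i := by
      intro i hi
      unfold codef
      congr 1
      ext j
      simp only [Set.mem_setOf_eq]
      constructor
      · rintro ⟨h1, h2⟩
        exact ⟨h1, (hτmono j i (by omega) hi).mp h2⟩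
      · rintro ⟨h1, h2⟩
        exact ⟨h1, (hτmono j i (by omega) hi).mpr h2⟩
    have hfiltV : (V.filter (· < a)).card = m := by
      have : V.filter (· < a) = (Finset.range m).image σ := by
        ext v
        simp only [Finset.mem_filter, Finset.mem_image, Finset.mem_range, hV]
        constructor
        · rintro ⟨⟨k, hk, rfl⟩, h2⟩
          refine ⟨k, ?_, rfl⟩
          rcases Nat.lt_or_ge k m with h | h
          · exact h
          · have : k = m := by omega
            subst this
            omega
        · rintro ⟨k, hk, rfl⟩
          exact ⟨⟨k, by omega, rfl⟩, hbelow k hk⟩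
      rw [this, Finset.card_image_of_injective _ σ.injective, Finset.card_range]
    have haV : (a : ℕ) ∉ V := by
      intro hv
      have := (hVmem p).mp (by rw [hσp]; exact hv)
      omega
    have ha1V : (a + 1 : ℕ) ∉ V := by
      intro hv
      have := (hVmem q).mp (by rw [hσq]; exact hv)
      omega
    have hfiltV1 : (V.filter (· < a + 1)).card = m := by
      have : V.filter (· < a + 1) = V.filter (· < a) := by
        ext v
        simp only [Finset.mem_filter]
        constructor
        · rintro ⟨h1, h2⟩
          refine ⟨h1, ?_⟩
          have : v ≠ a := fun h => haV (h ▸ h1)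
          omega
        · rintro ⟨h1, h2⟩
          exact ⟨h1, by omega⟩
      rw [this, hfiltV]
    have hτp : τ p = a + 1 := by
      rw [hτapp, hσp, rankFun_not_mem_eq_card V haV, hVcard, hfiltV]
      omega
    have hτq : τ q = a + 2 := by
      rw [hτapp, hσq, rankFun_not_mem_eq_card V ha1V, hVcard, hfiltV1]
      omega
    have hτsp : τ.symm (a+1) = p := by
      rw [Equiv.symm_apply_eq, hτp]
    have hτsq : τ.symm (a+2) = q := by
      rw [Equiv.symm_apply_eq, hτq]
    -- the restricted diagram
    set S := T.filter (fun c => m + 1 ≤ c.1) with hS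
    have hagreeTS : ∀ c : Cell, m + 1 ≤ c.1 → (c ∈ T ↔ c ∈ S) := by
      intro c hc
      rw [hS]
      simp [Finset.mem_filter, hc]; intro _; omega
    have hSlo : ∀ c : Cell, c ∈ S → m + 1 ≤ c.1 := by
      intro c hc
      rw [hS] at hc
      exact (Finset.mem_filter.mp hc).2
    have hScode : ∀ i j : ℕ, m + 1 ≤ i → ((i, j) ∈ S ↔ j < codef τ i) := by
      intro i j hi
      rw [← hagreeTS (i, j) hi, hτcode i hi]
      exact hTcode i j (by omega)
    have hmax1 : max (m+1) 1 = m + 1 := by omega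
    have IH := ih (fuel - 1) (by omega) τ (max N (m+1)) (m+1) (a+1) S hτfix
      (by omega) (by omega) (by omega)
      (by rw [hmax1]; exact fun k hk => hτlow k hk) hSlo hScode
    rw [hτsp, hτsq, hτcode p (by omega)] at IH
    obtain ⟨IHfwd, IHbwd⟩ := IH
    -- converting recursive slides between T and S
    have hrec_fwd : ∀ T', SlideAux T (m+1) (a+1) T' →
        p < q ∧ T' = insert (p, codef σ p) T := by
      intro T' hrec
      obtain ⟨c, hc1, hc2, hc3, hc4⟩ := slide_transfer hrec (by omega) hagreeTS
      obtain ⟨hlt, heq⟩ := IHfwd _ hc4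
      have hcS : c ∉ S := fun h => hc2 ((Finset.mem_filter.mp h).1)
      have hceq : c = (p, codef σ p) := insert_eq_insert hcS heq.symm
      exact ⟨hlt, by rw [hc3, hceq]⟩
    have hrec_bwd : p < q → SlideAux T (m+1) (a+1) (insert (p, codef σ p) T) := by
      intro hlt
      have hd := IHbwd hlt
      obtain ⟨c, hc2', hc2, hc3, hc4⟩ := slide_transfer hd (by omega)
        (fun c hc => (hagreeTS c hc).symm)
      have hceq : c = (p, codef σ p) := insert_eq_insert hc2 hc3
      rw [hceq] at hc4
      exact hc4
    constructor
    · -- forward direction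
      intro T' hd
      rcases Nat.lt_or_ge m a with hcase | hcase
      · have hmem : ((m : ℕ), a - m - 1) ∈ T := by
          rw [hcell]; exact ⟨hlom, by omega⟩
        cases hd with
        | s1a _ _ h1 h2 => exact absurd (h1 _ hmem hlom) (by simp; omega)
        | s1c _ _ _ h1 h2 h2' h3 hrec => exact absurd (h1 _ hmem hlom) (by simp; omega)
        | s2a _ _ i j hmem' hlo' hdiag' hmin' htop' =>
          have him : i = m := le_antisymm (hmin' _ hmem hlom (by simp; omega))
            (hdiagcol _ hmem' hlo' hdiag')
          subst him
          exact absurd (by rw [hcell]; exact ⟨hlom, by omega⟩ : ((m : ℕ), j + 1) ∈ T) htop'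
        | s2c _ _ i j _ hmem' hlo' hdiag' hmin' h1 h2 hrec =>
          have him : i = m := le_antisymm (hmin' _ hmem hlom (by simp; omega))
            (hdiagcol _ hmem' hlo' hdiag')
          subst him
          exact hrec_fwd T' hrec
      · have hmeq : m = a := by omega
        have hnodiag : ∀ c ∈ T, lo ≤ c.1 → c.1 + c.2 + 1 ≠ a := by
          intro c hc hl hdd
          have := hdiagcol c hc hl hdd
          omega
        cases hd with
        | s1a _ _ h1 h2 =>
          exact absurd (h2 ((m : ℕ), 0) (by rw [hcell]; exact ⟨hlom, by omega⟩) hlom)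
            (by simp; omega)
        | s1c _ _ _ h1 h2 h2' h3 hrec =>
          have hrec' : SlideAux T (m+1) (a+1) T' := by rw [hmeq]; exact hrec
          exact hrec_fwd T' hrec'
        | s2a _ _ i j hmem' hlo' hdiag' hmin' htop' =>
          exact absurd hdiag' (hnodiag _ hmem' hlo')
        | s2c _ _ i j _ hmem' hlo' hdiag' hmin' h1 h2 hrec =>
          exact absurd hdiag' (hnodiag _ hmem' hlo')
    · -- backward direction
      intro hlt
      have hrec := hrec_bwd hlt
      rcases Nat.lt_or_ge m a with hcase | hcase
      · have h0 : ((m : ℕ), a - m - 1) ∈ T := by rw [hcell]; exact ⟨hlom, by omega⟩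
        have h1 : ((m : ℕ), a - m - 1 + 1) ∈ T := by rw [hcell]; exact ⟨hlom, by omega⟩
        have h2 : ((m : ℕ), a - m - 1 + 2) ∈ T := by rw [hcell]; exact ⟨hlom, by omega⟩
        exact SlideAux.s2c lo a m (a - m - 1) _ h0 hlom (by omega)
          (fun c hc hl hdd => hdiagcol c hc hl hdd) h1 h2 hrec
      · have hmeq : m = a := by omega
        have hnodiag : ∀ c ∈ T, lo ≤ c.1 → c.1 + c.2 + 1 ≠ a := by
          intro c hc hl hdd
          have := hdiagcol c hc hl hdd
          omega
        have h2 : ((a : ℕ), 0) ∈ T := by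
          rw [← hmeq, hcell]; exact ⟨hlom, by omega⟩
        have h3 : ((a : ℕ), 1) ∈ T := by
          rw [← hmeq, hcell]; exact ⟨hlom, by omega⟩
        rw [hmeq] at hrec
        exact SlideAux.s1c lo a _ hnodiag h2 (by omega) h3 hrec


-- ==================== the outer layer ====================

lemma srdiagram_nil {T : Finset Cell} (h : SRDiagram [] T) : T = ∅ := by
  generalize he : ([] : List ℕ) = v at h
  cases h with
  | nil => rfl
  | snoc hw ha => exact absurd he.symm (by simp)

lemma srdiagram_snoc {w : List ℕ} {a : ℕ} {T' : Finset Cell}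
    (h : SRDiagram (w ++ [a]) T') : ∃ T, SRDiagram w T ∧ Slides T a T' := by
  generalize he : w ++ [a] = v at h
  cases h with
  | nil => exact absurd he (by simp)
  | snoc hw ha =>
    obtain ⟨h1, h2⟩ := List.append_inj' he (by simp)
    subst h1
    obtain rfl : a = _ := by injection h2
    exact ⟨_, hw, ha⟩

lemma inv_symm_eq (ω : Equiv.Perm ℕ) : (ω⁻¹).symm = ω := rfl

lemma inv_append (w : List ℕ) (a : ℕ) :
    (permOf (w ++ [a]))⁻¹ = Equiv.swap a (a+1) * (permOf w)⁻¹ := by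
  rw [permOf_append_s10, mul_inv_rev, Equiv.swap_inv]

def charT (w : List ℕ) (T : Finset Cell) : Prop :=
  ∀ i j : ℕ, (i, j) ∈ T ↔ j < codef (permOf w)⁻¹ i

lemma codef_one (i : ℕ) : codef 1 i = 0 := by
  unfold codef
  convert Set.ncard_empty (ℕ)
  ext j
  simp only [Set.mem_setOf_eq, Equiv.Perm.coe_one, id_eq, Set.mem_empty_iff_false, iff_false,
    not_and]
  omega

lemma invN_one : invN 1 = 0 := by
  unfold invN
  convert Set.ncard_empty (ℕ × ℕ)
  ext ⟨i, j⟩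
  simp only [invSet, Set.mem_setOf_eq, Equiv.Perm.coe_one, id_eq, Set.mem_empty_iff_false,
    iff_false, not_and]
  omega

lemma sr_main (w : List ℕ) (hw : IsPosWord w) :
    (∀ T, SRDiagram w T → charT w T ∧ invN (permOf w) = w.length)
    ∧ (invN (permOf w) = w.length → ∃ T, SRDiagram w T) := by
  induction w using List.reverseRecOn with
  | nil =>
    constructor
    · intro T hT
      rw [srdiagram_nil hT]
      constructor
      · intro i j
        simp only [Finset.notMem_empty, false_iff, not_lt]
        have : permOf ([] : List ℕ) = 1 := rfl
        rw [this, inv_one, codef_one]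
        omega
      · have : permOf ([] : List ℕ) = 1 := rfl
        rw [this, invN_one]
        rfl
    · intro _
      exact ⟨∅, SRDiagram.nil⟩
  | append_singleton w a ih =>
    have ha : 1 ≤ a := hw a (by simp)
    have hwpos : IsPosWord w := fun b hb => hw b (by simp [hb])
    obtain ⟨ih1, ih2⟩ := ih hwpos
    obtain ⟨N, hN⟩ := permOf_fixedFrom w
    set ω := permOf w with hω
    set σ := ω⁻¹ with hσ
    have hfixσ : FixedFrom σ N := by
      have := hN.symm
      exact this
    have hσ0 : σ 0 = 0 := by
      have h0 : ω 0 = 0 := permOf_zero hwpos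
      rw [hσ]
      conv_lhs => rw [← h0]
      exact ω.symm_apply_apply 0
    have hσsymm : ∀ x, σ.symm x = ω x := fun x => rfl
    have hlow : ∀ k, k < max 0 1 → σ k < max 0 1 := by
      intro k hk
      have : k = 0 := by omega
      subst this
      rw [hσ0]
      omega
    have hlen : (w ++ [a]).length = w.length + 1 := by simp
    have hchar_step : σ.symm a < σ.symm (a+1) → ∀ T, charT w T →
        charT (w ++ [a]) (insert (σ.symm a, codef σ (σ.symm a)) T) := by
      intro hlt T hchar0 i j
      have hchar : ∀ i j : ℕ, (i, j) ∈ T ↔ j < codef σ i := fun i j => hchar0 i j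
      rw [inv_append, ← hω, ← hσ]
      rw [codef_step hlt i]
      by_cases hip : i = σ.symm a
      · rw [if_pos hip]
        constructor
        · intro hmem
          rcases Finset.mem_insert.mp hmem with heq | hmem'
          · rw [Prod.mk.injEq] at heq
            rw [hip, heq.2]
            omega
          · have := (hchar i j).mp hmem'
            omega
        · intro hj
          rcases Nat.lt_or_ge j (codef σ i) with h | h
          · exact Finset.mem_insert_of_mem ((hchar i j).mpr h)
          · have hje : j = codef σ i := by omega
            have hcc : ((i : ℕ), j) = (σ.symm a, codef σ (σ.symm a)) := by
              rw [Prod.mk.injEq]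
              exact ⟨hip, by rw [hje, hip]⟩
            rw [hcc]
            exact Finset.mem_insert_self _ _
      · rw [if_neg hip]
        constructor
        · intro hmem
          rcases Finset.mem_insert.mp hmem with heq | hmem'
          · rw [Prod.mk.injEq] at heq
            exact absurd heq.1 hip
          · exact (hchar i j).mp hmem'
        · intro hj
          exact Finset.mem_insert_of_mem ((hchar i j).mpr hj)
    constructor
    · rintro T' hD
      obtain ⟨T, hT, hslide⟩ := srdiagram_snoc hD
      obtain ⟨hcharw, hinvw⟩ := ih1 T hT
      have hTcode : ∀ i j : ℕ, (0:ℕ) ≤ i → ((i, j) ∈ T ↔ j < codef σ i) :=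
        fun i j _ => hcharw i j
      obtain ⟨MF, MB⟩ := slide_main N σ N 0 a T hfixσ (by omega) ha (by omega) hlow
        (fun c _ => Nat.zero_le _) hTcode
      obtain ⟨hlt, hT'⟩ := MF T' hslide
      have hltω : ω a < ω (a+1) := by rw [← hσsymm a, ← hσsymm (a+1)]; exact hlt
      rcases invN_step ω N a hN with ⟨_, hstep⟩ | ⟨hgt, _⟩
      · constructor
        · rw [hT']
          exact hchar_step hlt T hcharw
        · rw [permOf_append_s10, ← hω, hstep, hinvw, hlen]
      · omega
    · intro hinv
      rw [hlen, permOf_append_s10, ← hω] at hinv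
      rcases invN_step ω N a hN with ⟨hlt, hstep⟩ | ⟨hgt, hstep⟩
      · have hinvw : invN ω = w.length := by omega
        obtain ⟨T, hT⟩ := ih2 hinvw
        obtain ⟨hcharw, _⟩ := ih1 T hT
        have hTcode : ∀ i j : ℕ, (0:ℕ) ≤ i → ((i, j) ∈ T ↔ j < codef σ i) :=
          fun i j _ => hcharw i j
        obtain ⟨MF, MB⟩ := slide_main N σ N 0 a T hfixσ (by omega) ha (by omega) hlow
          (fun c _ => Nat.zero_le _) hTcode
        have hlt' : σ.symm a < σ.symm (a+1) := by rw [hσsymm a, hσsymm (a+1)]; exact hlt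
        exact ⟨_, SRDiagram.snoc hT (MB hlt')⟩
      · exfalso
        have hle := invN_le_length (w := w)
        rw [← hω] at hle
        omega

theorem srw_iff_reduced' (w : List ℕ) (hw : IsPosWord w) :
    (∃ T, SRDiagram w T) ↔ IsReducedWord w := by
  obtain ⟨h1, h2⟩ := sr_main w hw
  rw [reduced_iff_invN hw]
  constructor
  · rintro ⟨T, hT⟩
    exact (h1 T hT).2
  · exact h2


/-- The SR algorithm does not terminate on a word of positive
integers if and only if the word is reduced. -/
theorem srw_iff_reduced (w : List ℕ) (hw : IsPosWord w) :
    (∃ T, SRDiagram w T) ↔ IsReducedWord w := by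
  obtain ⟨h1, h2⟩ := sr_main w hw
  rw [reduced_iff_invN hw]
  constructor
  · rintro ⟨T, hT⟩
    exact (h1 T hT).2
  · exact h2
end
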